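/- arXiv:0805.4307 — 2 statements merged into one kernel-verified Lean document; each statement's English description precedes it below -/
import Mathlib

section
/- (Contraction) For every process K_p of duration p > 0 and all histories H, H' with H(0) = H'(0) = lim_{s↗p} K_p(s), one has d(K_p∗H, K_p∗H') ≤ d(H,H'). -/
open MeasureTheory Filter Topology
open scoped ENNReal Classical

noncomputable section

/-- The state space `V = M₃ₓ₃(ℝ) × ℝᵏ × M_{k×3}(ℝ)`, each factor Euclidean. -/
abbrev V (k : ℕ) :=
  EuclideanSpace ℝ (Fin 3 × Fin 3) × EuclideanSpace ℝ (Fin k) ×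
    EuclideanSpace ℝ (Fin k × Fin 3)

/-- The norm `‖v‖ := |v_W| + |v_ν| + |v_N|`. -/
def vnorm {k : ℕ} (v : V k) : ℝ := ‖v.1‖ + ‖v.2.1‖ + ‖v.2.2‖

/-- The inner product of the Euclidean factors. -/
def vinner {k : ℕ} (v w : V k) : ℝ :=
  (inner ℝ v.1 w.1 : ℝ) + (inner ℝ v.2.1 w.2.1 : ℝ) + (inner ℝ v.2.2 w.2.2 : ℝ)

/-- The operator norm on `End(V)` corresponding to `vnorm`. -/
def opnorm {k : ℕ} (A : V k →L[ℝ] V k) : ℝ :=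
  sSup ((fun v => vnorm (A v)) '' {v : V k | vnorm v ≤ 1})

/-- A history: a bounded, right-continuous map `[0,∞) → V` of bounded variation. -/
structure IsHistory {k : ℕ} (H : ℝ → V k) : Prop where
  bounded : ∃ C : ℝ, ∀ s : ℝ, 0 ≤ s → vnorm (H s) ≤ C
  rightCont : ∀ s : ℝ, 0 ≤ s → ContinuousWithinAt H (Set.Ici s) s
  bv : BoundedVariationOn H (Set.Ici 0)

/-- The relaxation function `G` is absolutely continuous with Bochner-integrable
derivative `G'` on `[0,∞)`. -/
structure IsRelaxation {k : ℕ} (G G' : ℝ → (V k →L[ℝ] V k)) : Prop where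
  integrable : IntegrableOn G' (Set.Ici 0)
  ftc : ∀ t : ℝ, 0 ≤ t → G t = G 0 + ∫ s in Set.Icc (0:ℝ) t, G' s

/-- The distance `d(H,H') := sup_{t>0} ‖∫₀^∞ Ġ(s+t)(H(s) − H'(s)) ds‖`. -/
def hdist {k : ℕ} (G' : ℝ → (V k →L[ℝ] V k)) (H H' : ℝ → V k) : ℝ≥0∞ :=
  ⨆ t : Set.Ioi (0:ℝ), ENNReal.ofReal
    (vnorm (∫ s in Set.Ioi (0:ℝ), (G' (s + (t:ℝ))) (H s - H' s)))

/-- The response functional `Λ(H) := G(0)H(0) + ∫₀^∞ Ġ(s)H(s) ds`. -/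
def response {k : ℕ} (G G' : ℝ → (V k →L[ℝ] V k)) (H : ℝ → V k) : V k :=
  (G 0) (H 0) + ∫ s in Set.Ioi (0:ℝ), (G' s) (H s)

/-- The prolongation `K_p∗H` of a history `H` by a process `K` of duration `p`. -/
def prolong {k : ℕ} (p : ℝ) (K H : ℝ → V k) : ℝ → V k :=
  fun s => if s < p then K s else H (s - p)

/-- `K` (of duration `p`) prolongs `H`: `lim_{s↗p} K(s) = H(0)`. -/
def Prolongs {k : ℕ} (p : ℝ) (K H : ℝ → V k) : Prop :=
  Tendsto K (𝓝[<] p) (𝓝 (H 0))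

/-- Equivalence of histories: same initial value and equal responses under every
prolongation. -/
def EquivHist {k : ℕ} (G G' : ℝ → (V k →L[ℝ] V k)) (H H' : ℝ → V k) : Prop :=
  H 0 = H' 0 ∧ ∀ p : ℝ, 0 < p → ∀ K : ℝ → V k, Prolongs p K H →
    response G G' (prolong p K H) = response G G' (prolong p K H')

/-- The shifted history `Hˢ(u) := H(s+u)`. -/
def shift {k : ℕ} (H : ℝ → V k) (s : ℝ) : ℝ → V k := fun u => H (s + u)

/-- The work density `w(H) := ∫₀^∞ ⟨Λ(Hˢ), Ḣ(s)⟩ ds` of a differentiable history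
`H` with derivative `Hd`. -/
def work {k : ℕ} (G G' : ℝ → (V k →L[ℝ] V k)) (H Hd : ℝ → V k) : ℝ :=
  ∫ s in Set.Ioi (0:ℝ), vinner (response G G' (shift H s)) (Hd s)

/-- A differentiable history: locally absolutely continuous with derivative
`Hd ∈ L¹`. -/
structure IsDiffHistory {k : ℕ} (H Hd : ℝ → V k) : Prop where
  hist : IsHistory H
  integrable : IntegrableOn Hd (Set.Ici 0)
  ftc : ∀ t : ℝ, 0 ≤ t → H t = H 0 + ∫ s in Set.Icc (0:ℝ) t, Hd s

/-- A differentiable process of duration `p` with derivative `Kd`. -/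
structure IsDiffProcess {k : ℕ} (p : ℝ) (K Kd : ℝ → V k) : Prop where
  pos : 0 < p
  integrable : IntegrableOn Kd (Set.Icc 0 p)
  ftc : ∀ t : ℝ, 0 ≤ t → t < p → K t = K 0 + ∫ s in Set.Icc (0:ℝ) t, Kd s

/-- The work over a prolongation: `w(K_p, H) := w(K_p∗H) − w(H)`. -/
def workP {k : ℕ} (G G' : ℝ → (V k →L[ℝ] V k)) (p : ℝ) (K Kd H Hd : ℝ → V k) : ℝ :=
  work G G' (prolong p K H) (prolong p Kd Hd) - work G G' H Hd

/-- The relaxed work `w^r_{H'}(H)` from the differentiable history `H'`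
(with derivative `H'd`) to the history `H`. -/
def relaxedWork {k : ℕ} (G G' : ℝ → (V k →L[ℝ] V k)) (H' H'd H : ℝ → V k) : EReal :=
  sInf { c : EReal | ∃ K Kd : ℝ → ℝ → V k,
    (∀ p : ℝ, 0 < p → IsDiffProcess p (K p) (Kd p) ∧ Prolongs p (K p) H') ∧
    Tendsto (fun p => hdist G' (prolong p (K p) H') H) atTop (𝓝 0) ∧
    c = Filter.liminf (fun p => ((workP G G' p (K p) (Kd p) H' H'd : ℝ) : EReal)) atTop }

/-- `H` is `w`-approachable from `H'`: there is a family of processes prolonging `H'`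
approaching `H` in the distance `d`, along which the work converges. -/
def WApproachable {k : ℕ} (G G' : ℝ → (V k →L[ℝ] V k)) (H' H'd H : ℝ → V k) : Prop :=
  ∃ K Kd : ℝ → ℝ → V k, ∃ L : ℝ,
    (∀ p : ℝ, 0 < p → IsDiffProcess p (K p) (Kd p) ∧ Prolongs p (K p) H') ∧
    Tendsto (fun p => hdist G' (prolong p (K p) H') H) atTop (𝓝 0) ∧
    Tendsto (fun p => workP G G' p (K p) (Kd p) H' H'd) atTop (𝓝 L)

/-- `Q(v) := ½⟨G(∞)v, v⟩`. -/
def Qform {k : ℕ} (Ginf : V k →L[ℝ] V k) (v : V k) : ℝ := (1/2) * vinner (Ginf v) v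

/-- The relaxation function is dissipative: `w(H) ≥ 0` for every differentiable
history with `H(∞) = 0`. -/
def DissipativeRelax {k : ℕ} (G G' : ℝ → (V k →L[ℝ] V k)) : Prop :=
  ∀ H Hd : ℝ → V k, IsDiffHistory H Hd → Tendsto H atTop (𝓝 (0 : V k)) →
    0 ≤ work G G' H Hd

/-- `w` satisfies the dissipation property along the history `H`. -/
def DissipationProperty {k : ℕ} (G G' : ℝ → (V k →L[ℝ] V k)) (H Hd : ℝ → V k) : Prop :=
  ∀ ε : ℝ, 0 < ε → ∃ δ : ℝ, 0 < δ ∧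
    ∀ p : ℝ, ∀ K Kd : ℝ → V k, IsDiffProcess p K Kd → Prolongs p K H →
      hdist G' (prolong p K H) H < ENNReal.ofReal δ → -ε < workP G G' p K Kd H Hd

/-- A free energy (lower potential for the work `w`). -/
def IsFreeEnergy {k : ℕ} (G G' : ℝ → (V k →L[ℝ] V k)) (ψ : (ℝ → V k) → EReal) : Prop :=
  ∀ H Hd H' H'd : ℝ → V k, IsDiffHistory H Hd → IsDiffHistory H' H'd →
    ∀ ε : ℝ, 0 < ε → ∃ δ : ℝ, 0 < δ ∧
      ∀ p : ℝ, ∀ K Kd : ℝ → V k, IsDiffProcess p K Kd → Prolongs p K H' →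
        hdist G' (prolong p K H') H < ENNReal.ofReal δ →
        ψ H - ψ H' < ((workP G G' p K Kd H' H'd + ε : ℝ) : EReal)

/-! On `(0, p)` the two prolongations agree, and past `p` they are the original histories
shifted by `p`; hence the integral defining `d(K∗H, K∗H')` at time `t` is the one defining
`d(H, H')` at time `t + p`, and the supremum over `t > 0` can only shrink. -/

open Set

theorem setIntegral_Ioi_comp_add_right {E : Type*} [NormedAddCommGroup E] [NormedSpace ℝ E]
    (g : ℝ → E) (p : ℝ) : ∫ u in Ioi (0 : ℝ), g (u + p) = ∫ s in Ioi p, g s := by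
  simpa only [preimage_add_const_Ioi, sub_self] using
    (measurePreserving_add_right volume p).setIntegral_preimage_emb
      (measurableEmbedding_addRight p) g (Ioi p)

section Prolong

variable {k : ℕ} {p : ℝ}

theorem prolong_of_lt (K H : ℝ → V k) {s : ℝ} (hs : s < p) : prolong p K H s = K s :=
  if_pos hs

theorem prolong_add_self (K H : ℝ → V k) {u : ℝ} (hu : 0 ≤ u) :
    prolong p K H (u + p) = H u := by
  simp [prolong, hu]

theorem setIntegral_Ioi_apply_prolong_sub (F : ℝ → V k →L[ℝ] V k) (hp : 0 < p)
    (K H H' : ℝ → V k) :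
    ∫ s in Ioi (0 : ℝ), F s (prolong p K H s - prolong p K H' s) =
      ∫ u in Ioi (0 : ℝ), F (u + p) (H u - H' u) := by
  have h_vanish : ∀ s ∈ Ioi 0 \ Ici p, F s (prolong p K H s - prolong p K H' s) = 0 :=
    fun s ⟨_, hs⟩ => by
      rw [prolong_of_lt K H (not_le.1 hs), prolong_of_lt K H' (not_le.1 hs), sub_self, map_zero]
  calc ∫ s in Ioi (0 : ℝ), F s (prolong p K H s - prolong p K H' s)
      = ∫ s in Ioi p, F s (prolong p K H s - prolong p K H' s) := by
        rw [setIntegral_eq_of_subset_of_forall_sdiff_eq_zero measurableSet_Ioi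
          (Ici_subset_Ioi.2 hp) h_vanish, integral_Ici_eq_integral_Ioi]
    _ = ∫ u in Ioi (0 : ℝ), F (u + p) (prolong p K H (u + p) - prolong p K H' (u + p)) :=
        (setIntegral_Ioi_comp_add_right _ p).symm
    _ = ∫ u in Ioi (0 : ℝ), F (u + p) (H u - H' u) :=
        setIntegral_congr_fun measurableSet_Ioi fun u hu => by
          rw [prolong_add_self K H hu.le, prolong_add_self K H' hu.le]

end Prolong

theorem hdist_contraction_general {k : ℕ} (G' : ℝ → (V k →L[ℝ] V k))
    (p : ℝ) (hp : 0 < p) (K : ℝ → V k)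
    (H H' : ℝ → V k) :
    hdist G' (prolong p K H) (prolong p K H') ≤ hdist G' H H' := by
  refine iSup_le fun ⟨t, ht⟩ => ?_
  rw [setIntegral_Ioi_apply_prolong_sub (fun s => G' (s + t)) hp]
  refine le_iSup_of_le ⟨p + t, add_pos hp ht⟩ ?_
  simp only [add_assoc, le_refl]

/-- Contraction: for every process `K` of duration `p > 0` and all
histories `H, H'` with `H(0) = H'(0) = lim_{s↗p} K(s)`,
`d(K∗H, K∗H') ≤ d(H,H')`. -/
theorem hdist_contraction {k : ℕ} (G G' : ℝ → (V k →L[ℝ] V k))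
    (hG : IsRelaxation G G') (p : ℝ) (hp : 0 < p) (K : ℝ → V k)
    (H H' : ℝ → V k) (hH : IsHistory H) (hH' : IsHistory H')
    (h0 : H 0 = H' 0) (hK : Prolongs p K H) :
    hdist G' (prolong p K H) (prolong p K H') ≤ hdist G' H H' :=
  hdist_contraction_general G' p hp K H H'
end
end

section
/- For every differentiable process K_p of duration p with integrable derivative K̇_p = (Ẇ_p, ν̇_p, Ṅ_p), and all differentiable histories H, H' that K_p prolongs, |w(K_p, H) − w(K_p, H')| ≤ d(H,H') · ∫₀^p ( |Ẇ_p(s)| + |ν̇_p(s)| + |Ṅ_p(s)| ) ds. In particular, for fixed K_p the map H ↦ w(K_p, H) is Lipschitz continuous with respect to d and is a state function (it takes equal values on equivalent histories). -/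
open MeasureTheory Filter Topology
open scoped ENNReal Classical

noncomputable section

/-! Over the process, `w(K_p, H)` is the integral of `⟨Λ((K_p∗H)ˢ), K̇_p(s)⟩` over `(0, p)`: after
the process the integrand of `w(K_p∗H)` is that of `w(H)`, shifted by `p`. For `s < p` the
histories `(K_p∗H)ˢ` and `(K_p∗H')ˢ` coincide up to time `p - s`, so the difference of their
responses is `∫₀^∞ Ġ(r + p - s)(H(r) - H'(r)) dr`, one of the terms whose supremum is
`d(H, H')`; integrating against `K̇_p` gives the bound. Equivalent histories are at distance
zero: the term of `d(H, H')` at `t` is the difference of the responses of `H` and `H'`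
prolonged by the constant process `H(0)` of duration `t`. -/

open Set

section VNorm

variable {k : ℕ}

lemma vnorm_nonneg (v : V k) : 0 ≤ vnorm v := by
  unfold vnorm; positivity

lemma norm_le_vnorm (v : V k) : ‖v‖ ≤ vnorm v := by
  have h1 : ‖v‖ = max ‖v.1‖ ‖v.2‖ := rfl
  have h2 : ‖v.2‖ = max ‖v.2.1‖ ‖v.2.2‖ := rfl
  rw [h1, h2]
  unfold vnorm
  refine max_le ?_ (max_le ?_ ?_) <;>
    linarith [norm_nonneg v.1, norm_nonneg v.2.1, norm_nonneg v.2.2]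

lemma vnorm_le_three_mul_norm (v : V k) : vnorm v ≤ 3 * ‖v‖ := by
  have h1 : ‖v.1‖ ≤ ‖v‖ := norm_fst_le v
  have h2 : ‖v.2.1‖ ≤ ‖v‖ := (norm_fst_le v.2).trans (norm_snd_le v)
  have h3 : ‖v.2.2‖ ≤ ‖v‖ := (norm_snd_le v.2).trans (norm_snd_le v)
  unfold vnorm; linarith

lemma abs_vinner_le (a b : V k) : |vinner a b| ≤ vnorm a * vnorm b := by
  have h1 := abs_real_inner_le_norm a.1 b.1
  have h2 := abs_real_inner_le_norm a.2.1 b.2.1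
  have h3 := abs_real_inner_le_norm a.2.2 b.2.2
  have h := abs_add_three (inner ℝ a.1 b.1) (inner ℝ a.2.1 b.2.1) (inner ℝ a.2.2 b.2.2)
  unfold vinner vnorm
  nlinarith [norm_nonneg a.1, norm_nonneg a.2.1, norm_nonneg a.2.2,
    norm_nonneg b.1, norm_nonneg b.2.1, norm_nonneg b.2.2,
    mul_nonneg (norm_nonneg a.1) (norm_nonneg b.2.1),
    mul_nonneg (norm_nonneg a.1) (norm_nonneg b.2.2),
    mul_nonneg (norm_nonneg a.2.1) (norm_nonneg b.1),
    mul_nonneg (norm_nonneg a.2.1) (norm_nonneg b.2.2),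
    mul_nonneg (norm_nonneg a.2.2) (norm_nonneg b.1),
    mul_nonneg (norm_nonneg a.2.2) (norm_nonneg b.2.1)]

lemma vinner_sub_left (a b c : V k) : vinner (a - b) c = vinner a c - vinner b c := by
  unfold vinner
  simp only [Prod.fst_sub, Prod.snd_sub, inner_sub_left]
  ring

lemma continuous_vnorm : Continuous (vnorm (k := k)) := by
  unfold vnorm; fun_prop

lemma continuous_vinner : Continuous fun q : V k × V k => vinner q.1 q.2 := by
  unfold vinner; fun_prop

end VNorm

section BddMeasurableOn

variable {E F : Type*} [NormedAddCommGroup E] [NormedAddCommGroup F]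

structure BddMeasurableOn (f : ℝ → E) (S : Set ℝ) : Prop where
  bdd : ∃ C, ∀ t ∈ S, ‖f t‖ ≤ C
  exists_stronglyMeasurable_eqOn : ∃ g : ℝ → E, StronglyMeasurable g ∧ EqOn f g S

lemma bddMeasurableOn_const (c : E) (S : Set ℝ) : BddMeasurableOn (fun _ => c) S :=
  ⟨⟨‖c‖, fun _ _ => le_rfl⟩, ⟨_, stronglyMeasurable_const, eqOn_refl _ _⟩⟩

lemma BddMeasurableOn.mono {f : ℝ → E} {S T : Set ℝ} (hf : BddMeasurableOn f S)
    (hTS : T ⊆ S) : BddMeasurableOn f T := by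
  obtain ⟨⟨C, hC⟩, g, hg, hfg⟩ := hf
  exact ⟨⟨C, fun t ht => hC t (hTS ht)⟩, g, hg, hfg.mono hTS⟩

lemma BddMeasurableOn.aestronglyMeasurable {f : ℝ → E} {S : Set ℝ} (hf : BddMeasurableOn f S)
    (hS : MeasurableSet S) : AEStronglyMeasurable f (volume.restrict S) := by
  obtain ⟨g, hg, hfg⟩ := hf.exists_stronglyMeasurable_eqOn
  exact hg.aestronglyMeasurable.congr ((ae_restrict_mem hS).mono fun t ht => (hfg ht).symm)

lemma IntegrableOn.comp_sub_right_Ici {f : ℝ → E} (hf : IntegrableOn f (Ici 0)) (p : ℝ) :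
    IntegrableOn (fun s => f (s - p)) (Ici p) := by
  have h := ((measurePreserving_sub_right volume p).integrableOn_comp_preimage
    (measurableEmbedding_subRight p)).2 hf
  rwa [preimage_sub_const_Ici, zero_add] at h

variable [NormedSpace ℝ E] [NormedSpace ℝ F]

lemma BddMeasurableOn.integrableOn_apply {A : ℝ → E →L[ℝ] F} {f : ℝ → E} {S : Set ℝ}
    (hf : BddMeasurableOn f S) (hS : MeasurableSet S) (hA : IntegrableOn A S) :
    IntegrableOn (fun t => A t (f t)) S := by
  obtain ⟨C, hC⟩ := hf.bdd
  refine Integrable.mono' (hA.norm.mul_const C) ?_ ?_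
  · exact isBoundedBilinearMap_apply.continuous.comp_aestronglyMeasurable
      (hA.aestronglyMeasurable.prodMk (hf.aestronglyMeasurable hS))
  · filter_upwards [ae_restrict_mem hS] with t ht
    exact (A t).le_opNorm_of_le (hC t ht)

lemma BddMeasurableOn.integrableOn_vinner {k : ℕ} {Φ D : ℝ → V k} {S : Set ℝ}
    (hΦ : BddMeasurableOn Φ S) (hS : MeasurableSet S) (hD : IntegrableOn D S) :
    IntegrableOn (fun t => vinner (Φ t) (D t)) S := by
  obtain ⟨C, hC⟩ := hΦ.bdd
  refine Integrable.mono' ((hD.norm.const_mul 3).const_mul (3 * C)) ?_ ?_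
  · exact (continuous_vinner.comp_aestronglyMeasurable
      ((hΦ.aestronglyMeasurable hS).prodMk hD.aestronglyMeasurable) :)
  · filter_upwards [ae_restrict_mem hS] with t ht
    have hΦt : vnorm (Φ t) ≤ 3 * C := (vnorm_le_three_mul_norm _).trans (by linarith [hC t ht])
    calc ‖vinner (Φ t) (D t)‖ ≤ vnorm (Φ t) * vnorm (D t) := abs_vinner_le _ _
      _ ≤ 3 * C * (3 * ‖D t‖) :=
        mul_le_mul hΦt (vnorm_le_three_mul_norm _) (vnorm_nonneg _)
          ((vnorm_nonneg _).trans hΦt)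

lemma exists_continuous_eqOn_add_integral {f g : ℝ → E} {S T : Set ℝ} (hT : MeasurableSet T)
    (hg : IntegrableOn g T) (hS : S ⊆ Ici 0) (hST : ∀ t ∈ S, Icc 0 t ⊆ T)
    (hf : ∀ t ∈ S, f t = f 0 + ∫ s in Icc 0 t, g s) :
    ∃ fc : ℝ → E, Continuous fc ∧ EqOn f fc S := by
  have hgi : Integrable (T.indicator g) := (integrable_indicator_iff hT).2 hg
  refine ⟨fun t => f 0 + ∫ s in (0:ℝ)..t, T.indicator g s, continuous_const.add
    (intervalIntegral.continuous_primitive (fun _ _ => hgi.intervalIntegrable) 0), fun t ht => ?_⟩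
  simp only
  rw [hf t ht, intervalIntegral.integral_of_le (hS ht), setIntegral_indicator hT,
    inter_eq_left.2 (Ioc_subset_Icc_self.trans (hST t ht)), integral_Icc_eq_integral_Ioc]

lemma stronglyMeasurable_integral_Ioi_apply_add {A : ℝ → E →L[ℝ] F} {f : ℝ → E}
    (hA : StronglyMeasurable A) (hf : StronglyMeasurable f) :
    StronglyMeasurable fun s => ∫ u in Ioi (0:ℝ), A u (f (s + u)) := by
  have h : StronglyMeasurable (Function.uncurry fun s u : ℝ => A u (f (s + u))) :=
    isBoundedBilinearMap_apply.continuous.comp_stronglyMeasurable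
      ((hA.comp_measurable measurable_snd).prodMk
        (hf.comp_measurable (measurable_fst.add measurable_snd)))
  exact h.integral_prod_right

lemma setIntegral_Ioi_comp_add_right_s6 (f : ℝ → E) (t : ℝ) :
    ∫ x in Ioi 0, f (x + t) = ∫ x in Ioi t, f x := by
  have h := (measurePreserving_add_right volume t).setIntegral_preimage_emb
    (measurableEmbedding_addRight t) f (Ioi t)
  rwa [preimage_add_const_Ioi, sub_self] at h

end BddMeasurableOn

section Histories

variable {k : ℕ}

lemma IsDiffHistory.bddMeasurableOn {H Hd : ℝ → V k} (hH : IsDiffHistory H Hd) :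
    BddMeasurableOn H (Ici 0) := by
  obtain ⟨C, hC⟩ := hH.hist.bounded
  obtain ⟨Hc, hHc, hHHc⟩ := exists_continuous_eqOn_add_integral measurableSet_Ici
    hH.integrable subset_rfl (fun _ _ => Icc_subset_Ici_self) hH.ftc
  exact ⟨⟨C, fun t ht => (norm_le_vnorm _).trans (hC t ht)⟩, Hc, hHc.stronglyMeasurable,
    hHHc⟩

lemma IsDiffProcess.bddMeasurableOn {p : ℝ} {K Kd : ℝ → V k} (hK : IsDiffProcess p K Kd) :
    BddMeasurableOn K (Ico 0 p) := by
  obtain ⟨Kc, hKc, hKKc⟩ := exists_continuous_eqOn_add_integral (S := Ico 0 p)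
    measurableSet_Icc hK.integrable (fun _ ht => ht.1)
    (fun _ ht => Icc_subset_Icc_right ht.2.le) (fun t ht => hK.ftc t ht.1 ht.2)
  obtain ⟨C, hC⟩ :=
    isCompact_Icc.exists_bound_of_continuousOn (hKc.continuousOn (s := Icc 0 p))
  exact ⟨⟨C, fun t ht => hKKc ht ▸ hC t (Ico_subset_Icc_self ht)⟩, Kc,
    hKc.stronglyMeasurable, hKKc⟩

lemma shift_prolong (p s : ℝ) (K H : ℝ → V k) :
    shift (prolong p K H) s = prolong (p - s) (shift K s) H := by
  funext u
  simp only [shift, prolong, lt_sub_iff_add_lt', sub_sub_eq_add_sub, add_comm u s]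

lemma eqOn_prolong_shift_of_nonpos {t : ℝ} (ht : t ≤ 0) (K H : ℝ → V k) :
    EqOn (prolong t K H) (shift H (-t)) (Ici 0) := by
  intro u hu
  simp only [prolong, shift, if_neg (not_lt.2 (ht.trans hu)), sub_eq_neg_add]

lemma BddMeasurableOn.shift {B : ℝ → V k} (hB : BddMeasurableOn B (Ici 0)) {s : ℝ}
    (hs : 0 ≤ s) : BddMeasurableOn (shift B s) (Ici 0) := by
  obtain ⟨⟨C, hC⟩, Bm, hBm, hBBm⟩ := hB
  have hmem : ∀ u ∈ Ici (0:ℝ), s + u ∈ Ici 0 := fun u hu => add_nonneg hs hu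
  exact ⟨⟨C, fun u hu => hC _ (hmem u hu)⟩, fun u => Bm (s + u),
    hBm.comp_measurable (measurable_const_add s), fun u hu => hBBm (hmem u hu)⟩

lemma BddMeasurableOn.prolong {p : ℝ} {K H : ℝ → V k} (hK : BddMeasurableOn K (Ico 0 p))
    (hH : BddMeasurableOn H (Ici 0)) : BddMeasurableOn (prolong p K H) (Ici 0) := by
  obtain ⟨⟨CK, hCK⟩, Km, hKm, hKKm⟩ := hK
  obtain ⟨⟨CH, hCH⟩, Hm, hHm, hHHm⟩ := hH
  refine ⟨⟨max CK CH, fun t ht => ?_⟩, fun t => if t < p then Km t else Hm (t - p),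
    hKm.ite measurableSet_Iio (hHm.comp_measurable (measurable_sub_const p)), fun t ht => ?_⟩
  all_goals
    simp only [_root_.prolong]
    split_ifs with htp
  · exact (hCK t ⟨ht, htp⟩).trans (le_max_left _ _)
  · exact (hCH _ (sub_nonneg.2 (not_lt.1 htp))).trans (le_max_right _ _)
  · exact hKKm ⟨ht, htp⟩
  · exact hHHm (sub_nonneg.2 (not_lt.1 htp))

end Histories

section Response

variable {k : ℕ} {G G' : ℝ → (V k →L[ℝ] V k)}

lemma response_congr {F F' : ℝ → V k} (h : EqOn F F' (Ici 0)) :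
    response G G' F = response G G' F' := by
  unfold response
  rw [h self_mem_Ici,
    setIntegral_congr_fun measurableSet_Ioi fun u hu => by rw [h (Ioi_subset_Ici_self hu)]]

lemma response_shift_prolong_of_le {p s : ℝ} (hps : p ≤ s) (K H : ℝ → V k) :
    response G G' (shift (prolong p K H) s) = response G G' (shift H (s - p)) := by
  have h := eqOn_prolong_shift_of_nonpos (sub_nonpos.2 hps) (shift K s) H
  rw [neg_sub] at h
  rw [shift_prolong, response_congr h]

lemma norm_response_le (hG' : IntegrableOn G' (Ioi 0)) {B : ℝ → V k} {C : ℝ}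
    (hB : ∀ t ∈ Ici 0, ‖B t‖ ≤ C) :
    ‖response G G' B‖ ≤ ‖G 0‖ * C + (∫ u in Ioi 0, ‖G' u‖) * C := by
  unfold response
  refine (norm_add_le _ _).trans (add_le_add ((G 0).le_opNorm_of_le (hB 0 self_mem_Ici)) ?_)
  rw [← integral_mul_const]
  refine norm_integral_le_of_norm_le (hG'.norm.mul_const C) ?_
  filter_upwards [ae_restrict_mem measurableSet_Ioi] with u hu
  exact (G' u).le_opNorm_of_le (hB u (Ioi_subset_Ici_self hu))

lemma BddMeasurableOn.response_shift (hG' : IntegrableOn G' (Ioi 0)) {B : ℝ → V k}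
    (hB : BddMeasurableOn B (Ici 0)) :
    BddMeasurableOn (fun s => response G G' (_root_.shift B s)) (Ici 0) := by
  obtain ⟨⟨C, hC⟩, Bm, hBm, hBBm⟩ := hB
  have hG'm := hG'.aestronglyMeasurable
  refine ⟨⟨_, fun s hs =>
      norm_response_le hG' fun u hu => hC _ (mem_Ici.2 (add_nonneg hs hu))⟩,
    fun s => G 0 (Bm s) + ∫ u in Ioi 0, hG'm.mk G' u (Bm (s + u)), ?_, fun s hs => ?_⟩
  · exact ((G 0).continuous.comp_stronglyMeasurable hBm).add
      (stronglyMeasurable_integral_Ioi_apply_add hG'm.stronglyMeasurable_mk hBm)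
  · simp only [response, _root_.shift, add_zero]
    rw [hBBm hs]
    congr 1
    refine integral_congr_ae ?_
    filter_upwards [hG'm.ae_eq_mk, ae_restrict_mem measurableSet_Ioi] with u hgu hu
    rw [hgu, hBBm (mem_Ici.2 (add_nonneg hs (le_of_lt hu)))]

lemma response_prolong_sub {t : ℝ} (ht : 0 < t) {K H H' : ℝ → V k}
    (hF : IntegrableOn (fun u => G' u (prolong t K H u)) (Ioi 0))
    (hF' : IntegrableOn (fun u => G' u (prolong t K H' u)) (Ioi 0)) :
    response G G' (prolong t K H) - response G G' (prolong t K H') =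
      ∫ r in Ioi 0, G' (r + t) (H r - H' r) := by
  have hdiff : EqOn (fun u => G' u (prolong t K H u) - G' u (prolong t K H' u))
      ((Ici t).indicator fun u => G' u (H (u - t) - H' (u - t))) (Ioi 0) := by
    intro u _
    by_cases hut : u < t
    · simp [prolong, hut]
    · simp [prolong, hut, not_lt.1 hut, map_sub]
  unfold response
  rw [show prolong t K H 0 = prolong t K H' 0 by simp [prolong, ht], add_sub_add_left_eq_sub,
    ← integral_sub hF hF', setIntegral_congr_fun measurableSet_Ioi hdiff,
    setIntegral_indicator measurableSet_Ici, inter_eq_right.2 (Ici_subset_Ioi.2 ht),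
    integral_Ici_eq_integral_Ioi, ← setIntegral_Ioi_comp_add_right_s6]
  simp only [add_sub_cancel_right]

lemma response_shift_prolong_sub (hG' : IntegrableOn G' (Ioi 0)) {p s : ℝ} (hs : s ∈ Ico 0 p)
    {K H H' : ℝ → V k} (hF : BddMeasurableOn (prolong p K H) (Ici 0))
    (hF' : BddMeasurableOn (prolong p K H') (Ici 0)) :
    response G G' (shift (prolong p K H) s) - response G G' (shift (prolong p K H') s) =
      ∫ r in Ioi 0, G' (r + (p - s)) (H r - H' r) := by
  have hint : ∀ {H : ℝ → V k}, BddMeasurableOn (prolong p K H) (Ici 0) →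
      IntegrableOn (fun u => G' u (prolong (p - s) (shift K s) H u)) (Ioi 0) := fun hF => by
    rw [← shift_prolong]
    exact ((hF.shift hs.1).mono Ioi_subset_Ici_self).integrableOn_apply measurableSet_Ioi hG'
  rw [shift_prolong, shift_prolong]
  exact response_prolong_sub (sub_pos.2 hs.2) (hint hF) (hint hF')

end Response

section Work

variable {k : ℕ} {G G' : ℝ → (V k →L[ℝ] V k)}

lemma workP_eq_integral (hG' : IntegrableOn G' (Ioi 0)) {p : ℝ} {K Kd H Hd : ℝ → V k}
    (hK : IsDiffProcess p K Kd) (hH : IsDiffHistory H Hd) :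
    workP G G' p K Kd H Hd =
      ∫ s in Ioo 0 p, vinner (response G G' (shift (prolong p K H) s)) (Kd s) := by
  set Φ := fun s => response G G' (shift (prolong p K H) s)
  have hΦ : BddMeasurableOn Φ (Ici 0) :=
    (hK.bddMeasurableOn.prolong hH.bddMeasurableOn).response_shift hG'
  have hhead : EqOn (fun s => vinner (Φ s) (prolong p Kd Hd s)) (fun s => vinner (Φ s) (Kd s))
      (Ioo 0 p) := fun s hs => by simp only [prolong, if_pos hs.2]
  have htail : EqOn (fun s => vinner (Φ s) (prolong p Kd Hd s))
      (fun s => vinner (response G G' (shift H (s - p))) (Hd (s - p))) (Ici p) := fun s hs => by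
    simp only [Φ, prolong, if_neg (not_lt.2 (mem_Ici.1 hs)),
      response_shift_prolong_of_le (mem_Ici.1 hs)]
  have hIoo : IntegrableOn (fun s => vinner (Φ s) (prolong p Kd Hd s)) (Ioo 0 p) :=
    ((hΦ.mono fun s hs => le_of_lt hs.1).integrableOn_vinner measurableSet_Ioo
      (hK.integrable.mono_set Ioo_subset_Icc_self)).congr_fun hhead.symm measurableSet_Ioo
  have hIci : IntegrableOn (fun s => vinner (Φ s) (prolong p Kd Hd s)) (Ici p) :=
    (hΦ.mono (Ici_subset_Ici.2 hK.pos.le)).integrableOn_vinner measurableSet_Ici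
      ((IntegrableOn.comp_sub_right_Ici hH.integrable p).congr_fun
        (fun s hs => by simp only [prolong, if_neg (not_lt.2 (mem_Ici.1 hs))]) measurableSet_Ici)
  have hsplit : work G G' (prolong p K H) (prolong p Kd Hd) =
      (∫ s in Ioo 0 p, vinner (Φ s) (prolong p Kd Hd s)) +
        ∫ s in Ici p, vinner (Φ s) (prolong p Kd Hd s) := by
    rw [work, ← Ioo_union_Ici_eq_Ioi hK.pos,
      setIntegral_union ((Iio_disjoint_Ici le_rfl).mono_left Ioo_subset_Iio_self)
        measurableSet_Ici hIoo hIci]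
  rw [workP, hsplit, setIntegral_congr_fun measurableSet_Ioo hhead,
    setIntegral_congr_fun measurableSet_Ici htail, integral_Ici_eq_integral_Ioi,
    ← setIntegral_Ioi_comp_add_right_s6]
  simp only [add_sub_cancel_right, work]
  rfl

lemma ofReal_vnorm_le_hdist {t : ℝ} (ht : 0 < t) (H H' : ℝ → V k) :
    ENNReal.ofReal (vnorm (∫ r in Ioi 0, G' (r + t) (H r - H' r))) ≤ hdist G' H H' :=
  le_iSup (fun t : Ioi (0:ℝ) => ENNReal.ofReal
    (vnorm (∫ r in Ioi 0, G' (r + (t:ℝ)) (H r - H' r)))) ⟨t, ht⟩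

variable (G) in
theorem ofReal_abs_workP_sub_le (hG' : IntegrableOn G' (Ioi 0)) {p : ℝ}
    {K Kd H Hd H' H'd : ℝ → V k} (hK : IsDiffProcess p K Kd) (hH : IsDiffHistory H Hd)
    (hH' : IsDiffHistory H' H'd) :
    ENNReal.ofReal |workP G G' p K Kd H Hd - workP G G' p K Kd H' H'd| ≤
      hdist G' H H' * ENNReal.ofReal (∫ s in Icc 0 p, vnorm (Kd s)) := by
  have hF := hK.bddMeasurableOn.prolong hH.bddMeasurableOn
  have hF' := hK.bddMeasurableOn.prolong hH'.bddMeasurableOn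
  have hint : ∀ {F : ℝ → V k}, BddMeasurableOn F (Ici 0) →
      IntegrableOn (fun s => vinner (response G G' (shift F s)) (Kd s)) (Ioo 0 p) := fun hF =>
    ((hF.response_shift hG').mono fun s hs => le_of_lt hs.1).integrableOn_vinner
      measurableSet_Ioo (hK.integrable.mono_set Ioo_subset_Icc_self)
  have hvKd : IntegrableOn (fun s => vnorm (Kd s)) (Ioo 0 p) := by
    refine (hK.integrable.mono_set Ioo_subset_Icc_self).norm.const_mul 3 |>.mono'
      (continuous_vnorm.comp_aestronglyMeasurable
        (hK.integrable.mono_set Ioo_subset_Icc_self).aestronglyMeasurable) ?_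
    exact ae_of_all _ fun s => by
      rw [Real.norm_eq_abs, abs_of_nonneg (vnorm_nonneg _)]; exact vnorm_le_three_mul_norm _
  have hpoint : ∀ s ∈ Ioo 0 p,
      ‖vinner (response G G' (shift (prolong p K H) s)) (Kd s) -
        vinner (response G G' (shift (prolong p K H') s)) (Kd s)‖ₑ ≤
      hdist G' H H' * ENNReal.ofReal (vnorm (Kd s)) := fun s hs => by
    rw [← vinner_sub_left, Real.enorm_eq_ofReal_abs,
      response_shift_prolong_sub hG' (Ioo_subset_Ico_self hs) hF hF']
    refine (ENNReal.ofReal_le_ofReal (abs_vinner_le _ _)).trans ?_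
    rw [ENNReal.ofReal_mul (vnorm_nonneg _)]
    exact mul_le_mul_left (ofReal_vnorm_le_hdist (sub_pos.2 hs.2) H H') _
  rw [workP_eq_integral hG' hK hH, workP_eq_integral hG' hK hH',
    ← integral_sub (hint hF) (hint hF'), ← Real.enorm_eq_ofReal_abs]
  calc _ ≤ ∫⁻ s in Ioo 0 p, ‖vinner (response G G' (shift (prolong p K H) s)) (Kd s) -
          vinner (response G G' (shift (prolong p K H') s)) (Kd s)‖ₑ :=
        enorm_integral_le_lintegral_enorm _
    _ ≤ ∫⁻ s in Ioo 0 p, hdist G' H H' * ENNReal.ofReal (vnorm (Kd s)) :=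
        setLIntegral_mono' measurableSet_Ioo hpoint
    _ = hdist G' H H' * ∫⁻ s in Ioo 0 p, ENNReal.ofReal (vnorm (Kd s)) :=
        lintegral_const_mul'' _ hvKd.aemeasurable.ennreal_ofReal
    _ = hdist G' H H' * ENNReal.ofReal (∫ s in Icc 0 p, vnorm (Kd s)) := by
        rw [integral_Icc_eq_integral_Ioo,
          ofReal_integral_eq_lintegral_ofReal hvKd (ae_of_all _ fun s => vnorm_nonneg _)]

end Work

lemma hdist_eq_zero_of_equivHist {k : ℕ} {G G' : ℝ → (V k →L[ℝ] V k)}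
    (hG' : IntegrableOn G' (Ioi 0)) {H H' : ℝ → V k} (hH : BddMeasurableOn H (Ici 0))
    (hH' : BddMeasurableOn H' (Ici 0)) (hequiv : EquivHist G G' H H') : hdist G' H H' = 0 := by
  refine ENNReal.iSup_eq_zero.2 fun ⟨t, ht⟩ => ?_
  have hint : ∀ {F : ℝ → V k}, BddMeasurableOn F (Ici 0) →
      IntegrableOn (fun u => G' u (prolong t (fun _ => H 0) F u)) (Ioi 0) := fun hF =>
    (((bddMeasurableOn_const _ _).prolong hF).mono Ioi_subset_Ici_self).integrableOn_apply
      measurableSet_Ioi hG'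
  have hresp := hequiv.2 t ht (fun _ => H 0) tendsto_const_nhds
  rw [← sub_eq_zero, response_prolong_sub ht (hint hH) (hint hH')] at hresp
  simp only [hresp, vnorm, Prod.fst_zero, Prod.snd_zero, norm_zero, add_zero,
    ENNReal.ofReal_zero]

theorem workP_lipschitz_state_general {k : ℕ} (G G' : ℝ → (V k →L[ℝ] V k))
    (hG : IsRelaxation G G') (p : ℝ) (K Kd : ℝ → V k)
    (hK : IsDiffProcess p K Kd) (H Hd H' H'd : ℝ → V k)
    (hH : IsDiffHistory H Hd) (hH' : IsDiffHistory H' H'd) :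
    (ENNReal.ofReal |workP G G' p K Kd H Hd - workP G G' p K Kd H' H'd| ≤
      hdist G' H H' * ENNReal.ofReal (∫ s in Set.Icc (0:ℝ) p, vnorm (Kd s))) ∧
    (EquivHist G G' H H' →
      workP G G' p K Kd H Hd = workP G G' p K Kd H' H'd) := by
  have hG' : IntegrableOn G' (Ioi 0) := hG.integrable.mono_set Ioi_subset_Ici_self
  have hlip := ofReal_abs_workP_sub_le G hG' hK hH hH'
  refine ⟨hlip, fun hequiv => ?_⟩
  rwa [hdist_eq_zero_of_equivHist hG' hH.bddMeasurableOn hH'.bddMeasurableOn hequiv, zero_mul,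
    nonpos_iff_eq_zero, ENNReal.ofReal_eq_zero, abs_nonpos_iff, sub_eq_zero] at hlip

/-- `|w(K_p,H) − w(K_p,H')| ≤ d(H,H') · ∫₀^p ‖K̇_p(s)‖ ds`; in
particular, for fixed `K_p` the map `H ↦ w(K_p,H)` is Lipschitz continuous with
respect to `d` and is a state function. -/
theorem workP_lipschitz_state {k : ℕ} (G G' : ℝ → (V k →L[ℝ] V k))
    (hG : IsRelaxation G G') (p : ℝ) (K Kd : ℝ → V k)
    (hK : IsDiffProcess p K Kd) (H Hd H' H'd : ℝ → V k)
    (hH : IsDiffHistory H Hd) (hH' : IsDiffHistory H' H'd)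
    (hpH : Prolongs p K H) (hpH' : Prolongs p K H') :
    (ENNReal.ofReal |workP G G' p K Kd H Hd - workP G G' p K Kd H' H'd| ≤
      hdist G' H H' * ENNReal.ofReal (∫ s in Set.Icc (0:ℝ) p, vnorm (Kd s))) ∧
    (EquivHist G G' H H' →
      workP G G' p K Kd H Hd = workP G G' p K Kd H' H'd) :=
  workP_lipschitz_state_general G G' hG p K Kd hK H Hd H' H'd hH hH'
end
end
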